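/- arXiv:2003.04588 — 6 statements merged into one kernel-verified Lean document; each statement's English description precedes it below -/
import Mathlib

section
/- Let V be a finite-dimensional complex vector space, Ω₁₂, Ω₂₃ ∈ End(V), and κ a nonzero complex number. Suppose v ∈ V is an eigenvector of Ω₁₂ with eigenvalue λ, and for every positive integer n, λ + nκ is not an eigenvalue of Ω₁₂. Then there exists a unique formal power series solution f(x) = x^{λ/κ}(v + Σ_{n≥1} vₙ xⁿ) of the differential equation κ f'(x) = (Ω₁₂/x + Ω₂₃/(x−1)) f(x); i.e., the coefficients vₙ ∈ V exist and are uniquely determined by the recursion (Ω₁₂ − (λ + nκ)·Id) vₙ = Ω₂₃ (vₙ₋₁ + vₙ₋₂ + ⋯ + v₀) with v₀ = v. -/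
/-! Since no `λ + nκ` (`n ≥ 1`) is an eigenvalue of `Ω₁₂`, every `Ω₁₂ - (λ + nκ)` is bijective
on the finite-dimensional `V`, so the recursion solves for `vₙ` given `v₀, …, vₙ₋₁`, in exactly
one way. -/

open Finset Function

section PartialSumRecursion

variable {β : Type*} [AddCommMonoid β]

def SolvesPartialSumRecursion (g : ℕ → β → β) (F : β → β) (v : β) (vs : ℕ → β) : Prop :=
  vs 0 = v ∧ ∀ n, 0 < n → g n (vs n) = F (∑ k ∈ range n, vs k)

theorem exists_solvesPartialSumRecursion {g : ℕ → β → β} (hg : ∀ n, 0 < n → Surjective (g n))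
    (F : β → β) (v : β) : ∃ vs, SolvesPartialSumRecursion g F v vs := by
  let step : ℕ → β → β := fun n s => surjInv (hg (n + 1) n.succ_pos) (F s)
  -- Recursing on the partial sums rather than on `vs` avoids strong recursion.
  let partialSum : ℕ → β := fun n => Nat.rec v (fun n s => s + step n s) n
  let vs : ℕ → β := fun n => Nat.casesOn n v (fun n => step n (partialSum n))
  have partialSum_eq : ∀ n, partialSum n = ∑ k ∈ range (n + 1), vs k := by
    intro n
    induction n with
    | zero => simp [partialSum, vs]
    | succ n ih => rw [sum_range_succ, ← ih]
  refine ⟨vs, rfl, fun n hn => ?_⟩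
  obtain ⟨m, rfl⟩ := Nat.exists_eq_add_of_lt hn
  rw [zero_add, ← partialSum_eq]
  exact surjInv_eq _ _

theorem SolvesPartialSumRecursion.unique {g : ℕ → β → β} (hg : ∀ n, 0 < n → Injective (g n))
    {F : β → β} {v : β} {vs ws : ℕ → β} (hvs : SolvesPartialSumRecursion g F v vs)
    (hws : SolvesPartialSumRecursion g F v ws) : vs = ws := by
  funext n
  induction n using Nat.strong_induction_on with
  | _ n ih =>
    rcases n with _ | m
    · rw [hvs.1, hws.1]
    · have earlier : ∑ k ∈ range (m + 1), vs k = ∑ k ∈ range (m + 1), ws k :=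
        sum_congr rfl fun k hk => ih k (mem_range.mp hk)
      apply hg (m + 1) m.succ_pos
      rw [hvs.2 _ m.succ_pos, hws.2 _ m.succ_pos, earlier]

theorem existsUnique_solvesPartialSumRecursion {g : ℕ → β → β}
    (hg : ∀ n, 0 < n → Bijective (g n)) (F : β → β) (v : β) :
    ∃! vs, SolvesPartialSumRecursion g F v vs := by
  obtain ⟨vs, hvs⟩ := exists_solvesPartialSumRecursion (fun n hn => (hg n hn).2) F v
  exact ⟨vs, hvs, fun ws hws => hws.unique (fun n hn => (hg n hn).1) hvs⟩

end PartialSumRecursion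

theorem Module.End.bijective_sub_smul_one_of_not_hasEigenvalue {K V : Type*} [Field K]
    [AddCommGroup V] [Module K V] [FiniteDimensional K V] {f : Module.End K V} {μ : K}
    (h : ¬ f.HasEigenvalue μ) : Bijective ⇑(f - μ • 1 : Module.End K V) := by
  rw [hasEigenvalue_iff, eigenspace_def, not_not] at h
  have hinj : Function.Injective ⇑(f - μ • 1 : Module.End K V) := LinearMap.ker_eq_bot.mp h
  exact ⟨hinj, LinearMap.injective_iff_surjective.mp hinj⟩

theorem stmt0_general (V : Type*) [AddCommGroup V] [Module ℂ V] [FiniteDimensional ℂ V]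
    (Ω₁₂ Ω₂₃ : Module.End ℂ V) (κ lam : ℂ) (v : V)
    (hno : ∀ n : ℕ, 0 < n → ¬ Module.End.HasEigenvalue Ω₁₂ (lam + (n : ℂ) * κ)) :
    ∃! vs : ℕ → V, vs 0 = v ∧ ∀ n : ℕ, 0 < n →
      (Ω₁₂ - (lam + (n : ℂ) * κ) • (1 : Module.End ℂ V)) (vs n)
        = Ω₂₃ (∑ k ∈ Finset.range n, vs k) :=
  existsUnique_solvesPartialSumRecursion
    (fun n hn => Module.End.bijective_sub_smul_one_of_not_hasEigenvalue (hno n hn)) Ω₂₃ v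

/-- Existence and uniqueness of the formal power-series (asymptotic)
solution `f(x) = x^{λ/κ}(v + Σ_{n≥1} vₙ xⁿ)` of the three-point KZ equation
`κ f' = (Ω₁₂/x + Ω₂₃/(x-1)) f`, encoded by the recursion
`(Ω₁₂ - (λ + nκ)) vₙ = Ω₂₃ (v₀ + ⋯ + v_{n-1})`, `v₀ = v`. -/
theorem stmt0 (V : Type*) [AddCommGroup V] [Module ℂ V] [FiniteDimensional ℂ V]
    (Ω₁₂ Ω₂₃ : Module.End ℂ V) (κ lam : ℂ) (hκ : κ ≠ 0) (v : V) (hv0 : v ≠ 0)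
    (hv : Ω₁₂ v = lam • v)
    (hno : ∀ n : ℕ, 0 < n → ¬ Module.End.HasEigenvalue Ω₁₂ (lam + (n : ℂ) * κ)) :
    ∃! vs : ℕ → V, vs 0 = v ∧ ∀ n : ℕ, 0 < n →
      (Ω₁₂ - (lam + (n : ℂ) * κ) • (1 : Module.End ℂ V)) (vs n)
        = Ω₂₃ (∑ k ∈ Finset.range n, vs k) :=
  stmt0_general V Ω₁₂ Ω₂₃ κ lam v hno
end

section
/- On the projective gl(1|1)-module P_n, the Casimir element Ω = 2NE + ψ⁻ψ⁺ − ψ⁺ψ⁻ + E² acts nilpotently but not as zero: Ω·t = −2b ≠ 0 (in the basis t,r,l,b) and Ω² = 0 on P_n. -/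
/-! With `E = 0` the Casimir is the supercommutator `ψ⁻ψ⁺ − ψ⁺ψ⁻`, which on `P_n` is the rank-one
map `x ↦ -(t ⬝ x) b`; it squares to zero because `t ⬝ b = 0`, and `Ω t = -(t ⬝ t) b = -2b`. -/

open Matrix

theorem vecMulVec_mul_self_eq_zero {n R : Type*} [Fintype n] [NonUnitalSemiring R]
    {u v : n → R} (h : v ⬝ᵥ u = 0) : vecMulVec u v * vecMulVec u v = 0 := by
  rw [vecMulVec_mul_vecMulVec, h, zero_smul, vecMulVec_zero]

/-- On the projective module `P_n` (where `E = 0`), the Casimir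
`Ω = NE + EN + ψ⁻ψ⁺ − ψ⁺ψ⁻ + E²` acts nilpotently but nontrivially:
`Ω·t = −2b ≠ 0` and `Ω² = 0`. -/
theorem stmt6 (n : ℂ) :
    let E : Matrix (Fin 4) (Fin 4) ℂ := 0
    let Nm : Matrix (Fin 4) (Fin 4) ℂ :=
      !![n+1, 0, 0, 0; 0, n, 0, 0; 0, 0, n, 0; 0, 0, 0, n-1]
    let ψp : Matrix (Fin 4) (Fin 4) ℂ :=
      (1/2 : ℂ) • !![0, 1, 1, 0; 0, 0, 0, 1; 0, 0, 0, -1; 0, 0, 0, 0]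
    let ψm : Matrix (Fin 4) (Fin 4) ℂ :=
      (1/2 : ℂ) • !![0, 0, 0, 0; -1, 0, 0, 0; 1, 0, 0, 0; 0, 1, 1, 0]
    let Ω : Matrix (Fin 4) (Fin 4) ℂ := Nm * E + E * Nm + ψm * ψp - ψp * ψm + E * E
    let t : Fin 4 → ℂ := ![0, 1, 1, 0]
    let b : Fin 4 → ℂ := ![0, 1/2, -1/2, 0]
    Ω ≠ 0 ∧ Ω * Ω = 0 ∧ Ω.mulVec t = (-2 : ℂ) • b ∧ (-2 : ℂ) • b ≠ (0 : Fin 4 → ℂ) := by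
  intro E Nm ψp ψm Ω t b
  have hΩ : Ω = vecMulVec (-b) t := by
    simp only [Ω, E, mul_zero, zero_mul, add_zero, zero_add]
    ext i j
    fin_cases i <;> fin_cases j <;>
      simp [ψp, ψm, b, t, vecMulVec_apply] <;> norm_num
  have hb : b ≠ 0 := fun h ↦ by simpa [b] using congrFun h 1
  have ht : t ≠ 0 := fun h ↦ by simpa [t] using congrFun h 1
  have htb : t ⬝ᵥ (-b) = 0 := by norm_num [t, b]
  have htt : t ⬝ᵥ t = 2 := by norm_num [t]
  refine ⟨?_, ?_, ?_, smul_ne_zero (by norm_num) hb⟩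
  · rw [hΩ]
    exact vecMulVec_ne_zero (neg_ne_zero.mpr hb) ht
  · rw [hΩ]
    exact vecMulVec_mul_self_eq_zero htb
  · rw [hΩ, vecMulVec_mulVec, op_smul_eq_smul, htt, smul_neg, neg_smul]
end

section
/- Let T_{e₁,n₁} and T_{e₂,n₂} be typical gl(1|1)-modules with e₁, e₂, e₁+e₂ all nonzero. Then the tensor product module T_{e₁,n₁} ⊗ T_{e₂,n₂} (with the graded coproduct action x ↦ x⊗1 + 1⊗x with Koszul signs) decomposes as a direct sum of two typical modules, T_{e₁+e₂, n₁+n₂+1/2} ⊕ Π T_{e₁+e₂, n₁+n₂−1/2}, where Π denotes parity reversal; that is, there exist two gl(1|1)-submodules, isomorphic to T_{e₁+e₂, n₁+n₂+1/2} and Π T_{e₁+e₂, n₁+n₂−1/2} respectively, whose direct sum is the whole tensor product. -/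
open Matrix Kronecker

noncomputable section Gl11

/-- `E` on the typical module `T_{e,n}`. -/
def TE (e : ℂ) : Matrix (Fin 2) (Fin 2) ℂ := e • 1
/-- `N` on `T_{e,n}`. -/
def TN (n : ℂ) : Matrix (Fin 2) (Fin 2) ℂ := !![n + 1/2, 0; 0, n - 1/2]
/-- `ψ⁺` on `T_{e,n}`. -/
def Tp (e : ℂ) : Matrix (Fin 2) (Fin 2) ℂ := !![0, e; 0, 0]
/-- `ψ⁻` on `T_{e,n}`. -/
def Tm : Matrix (Fin 2) (Fin 2) ℂ := !![0, 0; 1, 0]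
/-- The parity operator on `T_{e,n}` (`u` even, `v` odd). -/
def Par2 : Matrix (Fin 2) (Fin 2) ℂ := !![1, 0; 0, -1]

set_option maxHeartbeats 1000000


def Qmat (e₁ e₂ : ℂ) : Matrix (Fin 2 ⊕ Fin 2) (Fin 2 × Fin 2) ℂ :=
  Matrix.of (Sum.elim
    (fun a bc => ![![![(1:ℂ),0],![0,0]],
                   ![![0,(e₁+e₂)⁻¹*e₂],![(e₁+e₂)⁻¹*e₁,0]]] a bc.1 bc.2)
    (fun a bc => ![![![(0:ℂ),(e₁+e₂)⁻¹],![-(e₁+e₂)⁻¹,0]],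
                   ![![0,0],![0,(e₁+e₂)⁻¹]]] a bc.1 bc.2))

def Pmat (e₁ e₂ : ℂ) : Matrix (Fin 2 × Fin 2) (Fin 2 ⊕ Fin 2) ℂ :=
  Matrix.of fun bc j => Sum.elim
    (fun a => ![![![(1:ℂ),0],![0,1]],![![0,1],![0,0]]] bc.1 bc.2 a)
    (fun a => ![![![(0:ℂ),0],![e₁,0]],![![-e₂,0],![0,e₁+e₂]]] bc.1 bc.2 a) j

lemma lQP (e₁ e₂ : ℂ) (h12 : e₁ + e₂ ≠ 0) : Qmat e₁ e₂ * Pmat e₁ e₂ = 1 := by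
  ext i j
  cases i <;> cases j <;>
  · rename_i a b
    fin_cases a <;> fin_cases b <;>
      simp [Qmat, Pmat, Matrix.mul_apply, Fintype.sum_prod_type, Fin.sum_univ_two,
        Matrix.one_apply] <;>
      (try (field_simp <;> ring))

lemma lPQ (e₁ e₂ : ℂ) (h12 : e₁ + e₂ ≠ 0) : Pmat e₁ e₂ * Qmat e₁ e₂ = 1 := by
  ext i j
  obtain ⟨a, b⟩ := i
  obtain ⟨c, d⟩ := j
  fin_cases a <;> fin_cases b <;> fin_cases c <;> fin_cases d <;>
    simp [Qmat, Pmat, Matrix.mul_apply, Fintype.sum_sum_type, Fin.sum_univ_two,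
      Matrix.one_apply, Prod.ext_iff] <;>
    (try (field_simp <;> ring))

lemma lE (e₁ e₂ : ℂ) :
    Qmat e₁ e₂ * (TE e₁ ⊗ₖ (1 : Matrix (Fin 2) (Fin 2) ℂ) + (1 : Matrix (Fin 2) (Fin 2) ℂ) ⊗ₖ TE e₂)
      = fromBlocks (TE (e₁ + e₂)) 0 0 (TE (e₁ + e₂)) * Qmat e₁ e₂ := by
  ext i j
  obtain ⟨c, d⟩ := j
  cases i <;>
  · rename_i a
    fin_cases a <;> fin_cases c <;> fin_cases d <;>
      simp [Qmat, TE, Matrix.mul_apply, Fintype.sum_prod_type, Fintype.sum_sum_type,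
        Fin.sum_univ_two, Matrix.one_apply, Matrix.fromBlocks] <;>
      (try ring)

lemma lN (e₁ e₂ n₁ n₂ : ℂ) :
    Qmat e₁ e₂ * (TN n₁ ⊗ₖ (1 : Matrix (Fin 2) (Fin 2) ℂ) + (1 : Matrix (Fin 2) (Fin 2) ℂ) ⊗ₖ TN n₂)
      = fromBlocks (TN (n₁ + n₂ + 1/2)) 0 0 (TN (n₁ + n₂ - 1/2)) * Qmat e₁ e₂ := by
  ext i j
  obtain ⟨c, d⟩ := j
  cases i <;>
  · rename_i a
    fin_cases a <;> fin_cases c <;> fin_cases d <;>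
      simp [Qmat, TN, Matrix.mul_apply, Fintype.sum_prod_type, Fintype.sum_sum_type,
        Fin.sum_univ_two, Matrix.one_apply, Matrix.fromBlocks] <;>
      (try ring)

lemma lpsi (e₁ e₂ : ℂ) (h12 : e₁ + e₂ ≠ 0) :
    Qmat e₁ e₂ * (Tp e₁ ⊗ₖ (1 : Matrix (Fin 2) (Fin 2) ℂ) + Par2 ⊗ₖ Tp e₂)
      = fromBlocks (Tp (e₁ + e₂)) 0 0 (Tp (e₁ + e₂)) * Qmat e₁ e₂ := by
  ext i j
  obtain ⟨c, d⟩ := j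
  cases i <;>
  · rename_i a
    fin_cases a <;> fin_cases c <;> fin_cases d <;>
      simp [Qmat, Tp, Par2, Matrix.mul_apply, Fintype.sum_prod_type, Fintype.sum_sum_type,
        Fin.sum_univ_two, Matrix.one_apply, Matrix.fromBlocks] <;>
      (try (field_simp <;> ring))

lemma lmpsi (e₁ e₂ : ℂ) (h12 : e₁ + e₂ ≠ 0) :
    Qmat e₁ e₂ * (Tm ⊗ₖ (1 : Matrix (Fin 2) (Fin 2) ℂ) + Par2 ⊗ₖ Tm)
      = fromBlocks Tm 0 0 Tm * Qmat e₁ e₂ := by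
  ext i j
  obtain ⟨c, d⟩ := j
  cases i <;>
  · rename_i a
    fin_cases a <;> fin_cases c <;> fin_cases d <;>
      simp [Qmat, Tm, Par2, Matrix.mul_apply, Fintype.sum_prod_type, Fintype.sum_sum_type,
        Fin.sum_univ_two, Matrix.one_apply, Matrix.fromBlocks] <;>
      (try (field_simp <;> ring))

lemma lpar (e₁ e₂ : ℂ) :
    Qmat e₁ e₂ * (Par2 ⊗ₖ Par2) = fromBlocks Par2 0 0 (-Par2) * Qmat e₁ e₂ := by
  ext i j
  obtain ⟨c, d⟩ := j
  cases i <;>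
  · rename_i a
    fin_cases a <;> fin_cases c <;> fin_cases d <;>
      simp [Qmat, Par2, Matrix.mul_apply, Fintype.sum_prod_type, Fintype.sum_sum_type,
        Fin.sum_univ_two, Matrix.one_apply, Matrix.fromBlocks] <;>
      (try ring)


/-- For `e₁, e₂, e₁+e₂ ≠ 0`, the graded tensor product
`T_{e₁,n₁} ⊗ T_{e₂,n₂}` (diagonal action with Koszul signs, encoded by the parity
operator in the odd generators) is isomorphic, as a `gl(1|1)`-supermodule, to
`T_{e₁+e₂,n₁+n₂+1/2} ⊕ Π T_{e₁+e₂,n₁+n₂−1/2}`: there is an invertible intertwiner to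
the block-diagonal action (with parity reversed on the second block). -/
theorem stmt7 (e₁ e₂ n₁ n₂ : ℂ) (he₁ : e₁ ≠ 0) (he₂ : e₂ ≠ 0) (h12 : e₁ + e₂ ≠ 0) :
    ∃ Q : Matrix (Fin 2 ⊕ Fin 2) (Fin 2 × Fin 2) ℂ,
      (∃ Q' : Matrix (Fin 2 × Fin 2) (Fin 2 ⊕ Fin 2) ℂ, Q * Q' = 1 ∧ Q' * Q = 1) ∧
      Q * (TE e₁ ⊗ₖ (1 : Matrix (Fin 2) (Fin 2) ℂ) + (1 : Matrix (Fin 2) (Fin 2) ℂ) ⊗ₖ TE e₂)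
        = fromBlocks (TE (e₁ + e₂)) 0 0 (TE (e₁ + e₂)) * Q ∧
      Q * (TN n₁ ⊗ₖ (1 : Matrix (Fin 2) (Fin 2) ℂ) + (1 : Matrix (Fin 2) (Fin 2) ℂ) ⊗ₖ TN n₂)
        = fromBlocks (TN (n₁ + n₂ + 1/2)) 0 0 (TN (n₁ + n₂ - 1/2)) * Q ∧
      Q * (Tp e₁ ⊗ₖ (1 : Matrix (Fin 2) (Fin 2) ℂ) + Par2 ⊗ₖ Tp e₂)
        = fromBlocks (Tp (e₁ + e₂)) 0 0 (Tp (e₁ + e₂)) * Q ∧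
      Q * (Tm ⊗ₖ (1 : Matrix (Fin 2) (Fin 2) ℂ) + Par2 ⊗ₖ Tm)
        = fromBlocks Tm 0 0 Tm * Q ∧
      Q * (Par2 ⊗ₖ Par2) = fromBlocks Par2 0 0 (-Par2) * Q :=
  ⟨Qmat e₁ e₂, ⟨Pmat e₁ e₂, lQP e₁ e₂ h12, lPQ e₁ e₂ h12⟩, lE e₁ e₂, lN e₁ e₂ n₁ n₂,
    lpsi e₁ e₂ h12, lmpsi e₁ e₂ h12, lpar e₁ e₂⟩

end Gl11
end

section
/- Let e ≠ 0. Then the tensor product T_{e,n₁} ⊗ T_{−e,n₂} of two typical gl(1|1)-modules with opposite E-eigenvalues is isomorphic as a gl(1|1)-module to the 4-dimensional projective module P_{n₁+n₂}; in particular it is indecomposable (not a direct sum of two 2-dimensional modules). -/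
/-!
Since the `E`-eigenvalues cancel, `E` acts by zero on `T_{e,n₁} ⊗ T_{−e,n₂}`, as on `P_{n₁+n₂}`.
With `v₀, v₁` and `w₀, w₁` the even and odd basis vectors of the factors, `x = v₀ ⊗ w₁` generates
the tensor product just as `r + l` generates `P`: its images under `ψ⁺`, `ψ⁻` and `ψ⁺ψ⁻` are
`−e v₀⊗w₀`, `v₁⊗w₁` and `e (v₀⊗w₁ + v₁⊗w₀)`, which together with `x` form a basis exactly when
`e ≠ 0`. Matching them with the corresponding vectors of `P` gives the intertwiner `tensorToP`.
-/

open Matrix Kronecker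

noncomputable section Gl11

def PE : Matrix (Fin 4) (Fin 4) ℂ := 0
def PN (n : ℂ) : Matrix (Fin 4) (Fin 4) ℂ :=
  !![n+1, 0, 0, 0; 0, n, 0, 0; 0, 0, n, 0; 0, 0, 0, n-1]
def Pp : Matrix (Fin 4) (Fin 4) ℂ :=
  (1/2 : ℂ) • !![0, 1, 1, 0; 0, 0, 0, 1; 0, 0, 0, -1; 0, 0, 0, 0]
def Pm : Matrix (Fin 4) (Fin 4) ℂ :=
  (1/2 : ℂ) • !![0, 0, 0, 0; -1, 0, 0, 0; 1, 0, 0, 0; 0, 1, 1, 0]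

/-- Column `(a, b)` is the image of `v_a ⊗ w_b` in the basis `t, r, l, b` of `P`. -/
def tensorToP (e : ℂ) : Matrix (Fin 4) (Fin 2 × Fin 2) ℂ :=
  of fun i p => ![![![1, 0, 0, 0], ![0, -e, -e, 0]],
                  ![![0, e - 1/2, e + 1/2, 0], ![0, 0, 0, -e]]] p.1 p.2 i

def pToTensor (e : ℂ) : Matrix (Fin 2 × Fin 2) (Fin 4) ℂ :=
  of fun p => ![![![1, 0, 0, 0], ![0, -(e + 1/2) / e, (e - 1/2) / e, 0]],
                ![![0, -1, 1, 0], ![0, 0, 0, -1 / e]]] p.1 p.2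

theorem tensorToP_mul_pToTensor {e : ℂ} (he : e ≠ 0) : tensorToP e * pToTensor e = 1 := by
  ext i j
  fin_cases i <;> fin_cases j <;>
    simp [mul_apply, Fintype.sum_prod_type, tensorToP, pToTensor, one_apply] <;>
    field_simp <;> ring

theorem pToTensor_mul_tensorToP {e : ℂ} (he : e ≠ 0) : pToTensor e * tensorToP e = 1 :=
  (mul_eq_one_comm_of_equiv finProdFinEquiv.symm).mp (tensorToP_mul_pToTensor he)

theorem kronecker_TE_add_TE_neg (e : ℂ) :
    TE e ⊗ₖ (1 : Matrix (Fin 2) (Fin 2) ℂ) + (1 : Matrix (Fin 2) (Fin 2) ℂ) ⊗ₖ TE (-e) = 0 := by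
  rw [TE, TE, smul_kronecker, kronecker_smul, ← add_smul, add_neg_cancel, zero_smul]

theorem TN_eq_smul_one_add (n : ℂ) : TN n = n • 1 + TN 0 := by
  ext i j; fin_cases i <;> fin_cases j <;> simp [TN]; ring

theorem PN_eq_smul_one_add (n : ℂ) : PN n = n • 1 + PN 0 := by
  ext i j; fin_cases i <;> fin_cases j <;> simp [PN, one_apply]; ring

theorem tensorToP_intertwines_TN_zero (e : ℂ) :
    tensorToP e *
        (TN 0 ⊗ₖ (1 : Matrix (Fin 2) (Fin 2) ℂ) + (1 : Matrix (Fin 2) (Fin 2) ℂ) ⊗ₖ TN 0)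
      = PN 0 * tensorToP e := by
  ext i ⟨a, b⟩
  fin_cases i <;> fin_cases a <;> fin_cases b <;>
    simp [mul_apply, Fintype.sum_prod_type, Fin.sum_univ_succ, tensorToP, TN, PN, one_apply] <;>
    ring

theorem kronecker_TN_add_TN (n₁ n₂ : ℂ) :
    TN n₁ ⊗ₖ (1 : Matrix (Fin 2) (Fin 2) ℂ) + (1 : Matrix (Fin 2) (Fin 2) ℂ) ⊗ₖ TN n₂
      = (n₁ + n₂) • 1 +
          (TN 0 ⊗ₖ (1 : Matrix (Fin 2) (Fin 2) ℂ) + (1 : Matrix (Fin 2) (Fin 2) ℂ) ⊗ₖ TN 0) := by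
  rw [TN_eq_smul_one_add n₁, TN_eq_smul_one_add n₂, add_kronecker, kronecker_add, smul_kronecker,
    kronecker_smul, one_kronecker_one, add_smul]
  abel

theorem tensorToP_intertwines_TN (e n₁ n₂ : ℂ) :
    tensorToP e *
        (TN n₁ ⊗ₖ (1 : Matrix (Fin 2) (Fin 2) ℂ) + (1 : Matrix (Fin 2) (Fin 2) ℂ) ⊗ₖ TN n₂)
      = PN (n₁ + n₂) * tensorToP e := by
  rw [kronecker_TN_add_TN, Matrix.mul_add, tensorToP_intertwines_TN_zero,
    PN_eq_smul_one_add (n₁ + n₂), Matrix.add_mul, Matrix.mul_smul, Matrix.smul_mul,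
    Matrix.mul_one, Matrix.one_mul]

theorem tensorToP_intertwines_Tp (e : ℂ) :
    tensorToP e * (Tp e ⊗ₖ (1 : Matrix (Fin 2) (Fin 2) ℂ) + Par2 ⊗ₖ Tp (-e))
      = Pp * tensorToP e := by
  ext i ⟨a, b⟩
  fin_cases i <;> fin_cases a <;> fin_cases b <;>
    simp [mul_apply, Fintype.sum_prod_type, Fin.sum_univ_succ, tensorToP, Tp, Par2, Pp, one_apply] <;>
    ring

theorem tensorToP_intertwines_Tm (e : ℂ) :
    tensorToP e * (Tm ⊗ₖ (1 : Matrix (Fin 2) (Fin 2) ℂ) + Par2 ⊗ₖ Tm) = Pm * tensorToP e := by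
  ext i ⟨a, b⟩
  fin_cases i <;> fin_cases a <;> fin_cases b <;>
    simp [mul_apply, Fintype.sum_prod_type, Fin.sum_univ_succ, tensorToP, Tm, Par2, Pm, one_apply] <;>
    ring

/-- For `e ≠ 0`, the graded tensor product `T_{e,n₁} ⊗ T_{−e,n₂}`
(diagonal action with Koszul signs) is isomorphic as a `gl(1|1)`-module to the
4-dimensional projective module `P_{n₁+n₂}`; in particular it is indecomposable. -/
theorem stmt8 (e n₁ n₂ : ℂ) (he : e ≠ 0) :
    ∃ Q : Matrix (Fin 4) (Fin 2 × Fin 2) ℂ,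
      (∃ Q' : Matrix (Fin 2 × Fin 2) (Fin 4) ℂ, Q * Q' = 1 ∧ Q' * Q = 1) ∧
      Q * (TE e ⊗ₖ (1 : Matrix (Fin 2) (Fin 2) ℂ) + (1 : Matrix (Fin 2) (Fin 2) ℂ) ⊗ₖ TE (-e))
        = PE * Q ∧
      Q * (TN n₁ ⊗ₖ (1 : Matrix (Fin 2) (Fin 2) ℂ) + (1 : Matrix (Fin 2) (Fin 2) ℂ) ⊗ₖ TN n₂)
        = PN (n₁ + n₂) * Q ∧
      Q * (Tp e ⊗ₖ (1 : Matrix (Fin 2) (Fin 2) ℂ) + Par2 ⊗ₖ Tp (-e)) = Pp * Q ∧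
      Q * (Tm ⊗ₖ (1 : Matrix (Fin 2) (Fin 2) ℂ) + Par2 ⊗ₖ Tm) = Pm * Q := by
  refine ⟨tensorToP e,
    ⟨pToTensor e, tensorToP_mul_pToTensor he, pToTensor_mul_tensorToP he⟩, ?_,
    tensorToP_intertwines_TN e n₁ n₂, tensorToP_intertwines_Tp e, tensorToP_intertwines_Tm e⟩
  rw [kronecker_TE_add_TE_neg, Matrix.mul_zero, PE, Matrix.zero_mul]

end Gl11
end

section
/- On the tensor product T_{e,n₁} ⊗ T_{−e,n₂} (e ≠ 0), the tensor Casimir Ω₁₂ = N⊗E + E⊗N + ψ⁻⊗ψ⁺ − ψ⁺⊗ψ⁻ + E⊗E has the single eigenvalue λ = e(n₂ − n₁) − e², and its nilpotent part (Ω₁₂ − λ·Id) is nonzero with square zero; the generalized eigenspace structure consists of two genuine eigenvectors and one Jordan block of size 2. -/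
open Matrix Kronecker

noncomputable section Gl11

/-- Tensor Casimir on `T_{e₁,n₁} ⊗ T_{e₂,n₂}` with super tensor signs. -/
def Ω₁₂ (e₁ n₁ e₂ n₂ : ℂ) : Matrix (Fin 2 × Fin 2) (Fin 2 × Fin 2) ℂ :=
  TN n₁ ⊗ₖ TE e₂ + TE e₁ ⊗ₖ TN n₂ + (Tm * Par2) ⊗ₖ Tp e₂
    - (Tp e₁ * Par2) ⊗ₖ Tm + TE e₁ ⊗ₖ TE e₂

/-!
`Ω₁₂ - λ` is the rank-one matrix `u vᵀ`, where `u` is the indicator of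
the odd part `span {v₀ ⊗ v₁, v₁ ⊗ v₀}` and `v (i, k) = e (i - k)`. Since `v ⬝ u = -e + e = 0`,
`(u vᵀ)² = (v ⬝ u) • u vᵀ = 0`, while `u vᵀ ≠ 0` as soon as `e ≠ 0`.
-/

namespace Matrix

theorem rank_eq_zero_iff {K m n : Type*} [Field K] [Fintype n] [DecidableEq n]
    {A : Matrix m n K} : A.rank = 0 ↔ A = 0 := by
  rw [rank, Submodule.finrank_eq_zero, LinearMap.range_eq_bot, ← toLin'_apply',
    LinearEquiv.map_eq_zero_iff]

theorem rank_vecMulVec_of_ne_zero {K m n : Type*} [Field K] [Fintype n] [DecidableEq n]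
    {w : m → K} {v : n → K} (hw : w ≠ 0) (hv : v ≠ 0) : (vecMulVec w v).rank = 1 := by
  refine le_antisymm (rank_vecMulVec_le w v)
    (Nat.one_le_iff_ne_zero.2 (rank_eq_zero_iff.not.2 ?_))
  obtain ⟨i, hi⟩ := Function.ne_iff.1 hw
  obtain ⟨j, hj⟩ := Function.ne_iff.1 hv
  exact fun h ↦ mul_ne_zero hi hj congr($h i j)

theorem vecMulVec_mul_self_of_dotProduct_eq_zero {R n : Type*} [CommSemiring R] [Fintype n]
    {w v : n → R} (h : v ⬝ᵥ w = 0) : vecMulVec w v * vecMulVec w v = 0 := by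
  rw [vecMulVec_mul_vecMulVec, h, zero_smul, vecMulVec_zero]

end Matrix

def casimirNilpotentCol : Fin 2 × Fin 2 → ℂ := fun p ↦ if p.1 = p.2 then 0 else 1

def casimirNilpotentRow (e : ℂ) : Fin 2 × Fin 2 → ℂ := fun p ↦ e * ((p.1 : ℂ) - p.2)

theorem Ω₁₂_sub_smul_one_eq_vecMulVec (e n₁ n₂ : ℂ) :
    Ω₁₂ e n₁ (-e) n₂ - (e * (n₂ - n₁) - e ^ 2) • 1 =
      vecMulVec casimirNilpotentCol (casimirNilpotentRow e) := by
  ext ⟨i, k⟩ ⟨j, l⟩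
  fin_cases i <;> fin_cases k <;> fin_cases j <;> fin_cases l <;>
    simp [Ω₁₂, TE, TN, Tp, Tm, Par2, casimirNilpotentCol, casimirNilpotentRow, one_apply,
      vecMulVec_apply] <;> ring

theorem casimirNilpotentRow_dotProduct_col (e : ℂ) :
    casimirNilpotentRow e ⬝ᵥ casimirNilpotentCol = 0 := by
  simp [dotProduct, Fintype.sum_prod_type, casimirNilpotentRow, casimirNilpotentCol]

theorem casimirNilpotentCol_ne_zero : casimirNilpotentCol ≠ 0 :=
  Function.ne_iff.2 ⟨(0, 1), by simp [casimirNilpotentCol]⟩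

theorem casimirNilpotentRow_ne_zero {e : ℂ} (he : e ≠ 0) : casimirNilpotentRow e ≠ 0 :=
  Function.ne_iff.2 ⟨(1, 0), by simpa [casimirNilpotentRow]⟩

/-- On `T_{e,n₁} ⊗ T_{−e,n₂}` (`e ≠ 0`), the tensor Casimir has the
single eigenvalue `λ = e(n₂−n₁) − e²`; its nilpotent part `Ω₁₂ − λ` is nonzero of rank 1
with square zero (two genuine eigenvectors and one Jordan block of size 2). -/
theorem stmt11 (e n₁ n₂ : ℂ) (he : e ≠ 0) :
    let lam : ℂ := e * (n₂ - n₁) - e ^ 2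
    Ω₁₂ e n₁ (-e) n₂ - lam • 1 ≠ 0 ∧
    (Ω₁₂ e n₁ (-e) n₂ - lam • 1) * (Ω₁₂ e n₁ (-e) n₂ - lam • 1) = 0 ∧
    (Ω₁₂ e n₁ (-e) n₂ - lam • 1).rank = 1 := by
  intro lam
  rw [Ω₁₂_sub_smul_one_eq_vecMulVec]
  exact ⟨vecMulVec_ne_zero casimirNilpotentCol_ne_zero (casimirNilpotentRow_ne_zero he),
    vecMulVec_mul_self_of_dotProduct_eq_zero (casimirNilpotentRow_dotProduct_col e),
    rank_vecMulVec_of_ne_zero casimirNilpotentCol_ne_zero (casimirNilpotentRow_ne_zero he)⟩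

end Gl11
end

section
/- The function f(z₁,z₂) = A (z₁−z₂)^{δ/κ} (u₁⊗v₂ + v₁⊗u₂) with δ = n₁e₂ + n₂e₁ + e₁e₂ solves the two-point KZ equation κ∂₁f = Ω₁₂/(z₁−z₂)·f, κ∂₂f = −Ω₁₂/(z₁−z₂)·f with values in T_{e₁,n₁}⊗T_{e₂,n₂} where e₂ = −e₁; equivalently, the vector u₁⊗v₂ + v₁⊗u₂ is an eigenvector of the tensor Casimir Ω₁₂ with eigenvalue δ. -/
/-!
On the line spanned by an eigenvector `v` of `Ω₁₂` with eigenvalue `δ`, the KZ equations reduce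
to the scalar ODE `κ g'(w) = δ g(w) / w`, solved by `g(w) = A w^{δ/κ}`; the two equations are this
ODE composed with `w = z₁ - z₂`. For `e₂ = -e₁`, the vector `u₁⊗v₂ + v₁⊗u₂` is such an
eigenvector by a direct computation in the four-dimensional tensor product.
-/

open Matrix Kronecker

noncomputable section Gl11

/-- The vector `u₁⊗v₂ + v₁⊗u₂`. -/
def wTT : Fin 2 × Fin 2 → ℂ := fun p =>
  if p = ((0 : Fin 2), (1 : Fin 2)) then 1 else if p = ((1 : Fin 2), (0 : Fin 2)) then 1 else 0

theorem Ω₁₂_mulVec_wTT (e₁ n₁ n₂ : ℂ) :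
    (Ω₁₂ e₁ n₁ (-e₁) n₂).mulVec wTT = (n₁ * (-e₁) + n₂ * e₁ + e₁ * (-e₁)) • wTT := by
  ext ⟨i, j⟩
  fin_cases i <;> fin_cases j <;>
    simp [Ω₁₂, TE, TN, Tp, Tm, Par2, wTT, mulVec, dotProduct, Fintype.sum_prod_type,
      Matrix.one_apply] <;> ring

theorem Complex.hasDerivAt_cpow_div_const {w : ℂ} (hw : w ∈ Complex.slitPlane) (δ κ : ℂ) :
    HasDerivAt (fun z : ℂ => z ^ (δ / κ)) ((κ * w)⁻¹ * δ * w ^ (δ / κ)) w := by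
  refine (Complex.hasStrictDerivAt_cpow_const (c := δ / κ) hw).hasDerivAt.congr_deriv ?_
  rw [Complex.cpow_sub _ _ (Complex.slitPlane_ne_zero hw), Complex.cpow_one, mul_inv]
  ring

section KZ

variable {E : Type*} [NormedAddCommGroup E] [NormedSpace ℂ E]
  {T : E →ₗ[ℂ] E} {v : E} {δ : ℂ}

theorem hasDerivAt_cpow_smul_of_eigenvector (hv : T v = δ • v) (A κ : ℂ) {w : ℂ}
    (hw : w ∈ Complex.slitPlane) :
    HasDerivAt (fun z : ℂ => (A * z ^ (δ / κ)) • v)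
      ((κ * w)⁻¹ • T ((A * w ^ (δ / κ)) • v)) w := by
  refine (((Complex.hasDerivAt_cpow_div_const hw δ κ).const_mul A).smul_const v).congr_deriv ?_
  rw [map_smul, hv, smul_smul, smul_smul]
  ring_nf

theorem kz_of_eigenvector (hv : T v = δ • v) (A κ : ℂ) {z₁ z₂ : ℂ}
    (hz : z₁ - z₂ ∈ Complex.slitPlane) :
    HasDerivAt (fun z : ℂ => (A * (z - z₂) ^ (δ / κ)) • v)
        ((κ * (z₁ - z₂))⁻¹ • T ((A * (z₁ - z₂) ^ (δ / κ)) • v)) z₁ ∧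
      HasDerivAt (fun z : ℂ => (A * (z₁ - z) ^ (δ / κ)) • v)
        (-((κ * (z₁ - z₂))⁻¹ • T ((A * (z₁ - z₂) ^ (δ / κ)) • v))) z₂ :=
  have hf := hasDerivAt_cpow_smul_of_eigenvector hv A κ hz
  ⟨hf.comp_sub_const z₁ z₂, hf.comp_const_sub z₁ z₂⟩

end KZ

theorem stmt15_general (e₁ n₁ n₂ A κ : ℂ) :
    let e₂ : ℂ := -e₁
    let δ : ℂ := n₁ * e₂ + n₂ * e₁ + e₁ * e₂
    (Ω₁₂ e₁ n₁ e₂ n₂).mulVec wTT = δ • wTT ∧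
    (∀ z₁ z₂ : ℂ, z₁ - z₂ ∈ Complex.slitPlane →
      HasDerivAt (fun z : ℂ => (A * ((z - z₂) ^ (δ / κ))) • wTT)
        ((κ * (z₁ - z₂))⁻¹ •
          (Ω₁₂ e₁ n₁ e₂ n₂).mulVec ((A * ((z₁ - z₂) ^ (δ / κ))) • wTT)) z₁) ∧
    (∀ z₁ z₂ : ℂ, z₁ - z₂ ∈ Complex.slitPlane →
      HasDerivAt (fun z : ℂ => (A * ((z₁ - z) ^ (δ / κ))) • wTT)
        (-((κ * (z₁ - z₂))⁻¹ •
          (Ω₁₂ e₁ n₁ e₂ n₂).mulVec ((A * ((z₁ - z₂) ^ (δ / κ))) • wTT))) z₂) := by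
  intro e₂ δ
  have heig : (Ω₁₂ e₁ n₁ e₂ n₂).mulVecLin wTT = δ • wTT := Ω₁₂_mulVec_wTT e₁ n₁ n₂
  exact ⟨heig, fun z₁ z₂ hz => (kz_of_eigenvector heig A κ hz).1,
    fun z₁ z₂ hz => (kz_of_eigenvector heig A κ hz).2⟩

/-- With `e₂ = −e₁` and `δ = n₁e₂ + n₂e₁ + e₁e₂`, the vector
`u₁⊗v₂ + v₁⊗u₂` is an eigenvector of the tensor Casimir with eigenvalue `δ`, and
`f(z₁,z₂) = A (z₁−z₂)^{δ/κ} (u₁⊗v₂ + v₁⊗u₂)` solves the two-point KZ equations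
`κ∂₁f = Ω₁₂ f/(z₁−z₂)`, `κ∂₂f = −Ω₁₂ f/(z₁−z₂)`. -/
theorem stmt15 (e₁ n₁ n₂ A κ : ℂ) (he : e₁ ≠ 0) (hκ : κ ≠ 0) :
    let e₂ : ℂ := -e₁
    let δ : ℂ := n₁ * e₂ + n₂ * e₁ + e₁ * e₂
    (Ω₁₂ e₁ n₁ e₂ n₂).mulVec wTT = δ • wTT ∧
    (∀ z₁ z₂ : ℂ, z₁ - z₂ ∈ Complex.slitPlane →
      HasDerivAt (fun z : ℂ => (A * ((z - z₂) ^ (δ / κ))) • wTT)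
        ((κ * (z₁ - z₂))⁻¹ •
          (Ω₁₂ e₁ n₁ e₂ n₂).mulVec ((A * ((z₁ - z₂) ^ (δ / κ))) • wTT)) z₁) ∧
    (∀ z₁ z₂ : ℂ, z₁ - z₂ ∈ Complex.slitPlane →
      HasDerivAt (fun z : ℂ => (A * ((z₁ - z) ^ (δ / κ))) • wTT)
        (-((κ * (z₁ - z₂))⁻¹ •
          (Ω₁₂ e₁ n₁ e₂ n₂).mulVec ((A * ((z₁ - z₂) ^ (δ / κ))) • wTT))) z₂) :=
  stmt15_general e₁ n₁ n₂ A κ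

end Gl11
end
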